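/- arXiv:1403.6921 — 3 statements merged into one kernel-verified Lean document; each statement's English description precedes it below -/
import Mathlib

section
/- Let f : (0, δ] → ℝ be a positive decreasing function (with δ > 0). Then the essential supremum over t ∈ (0, δ] of f(t)^{4/3} / (t · |f'(t)|) is infinite, i.e., one cannot have t·|f'(t)| ≥ c · f(t)^{4/3} for almost every t ∈ (0,δ] with a fixed c > 0. -/
open MeasureTheory Set

/-- **Lemma 6.1 (Appendix).** If `f : (0, δ] → ℝ` is a positive decreasing function
(with a.e. derivative `f'`), then one cannot have `-f'(t) * f(t)^(-4/3) ≥ C/t`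
for a.e. `t ∈ (0, δ]` with a fixed constant `C > 0`; equivalently the essential sup of
`f(t)^(4/3) / (t * |f'(t)|)` is infinite. -/
theorem stmt0 (δ : ℝ) (hδ : 0 < δ) (f f' : ℝ → ℝ)
    (hpos : ∀ t ∈ Ioc (0:ℝ) δ, 0 < f t)
    (hdec : ∀ s ∈ Ioc (0:ℝ) δ, ∀ t ∈ Ioc (0:ℝ) δ, s ≤ t → f t ≤ f s)
    (hderiv : ∀ᵐ t ∂(volume.restrict (Ioc (0:ℝ) δ)), HasDerivAt f (f' t) t) :
    ¬ ∃ C : ℝ, 0 < C ∧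
      ∀ᵐ t ∂(volume.restrict (Ioc (0:ℝ) δ)),
        (-f' t) * (f t) ^ (-(4:ℝ)/3) ≥ C / t := by
  rintro ⟨C, hC, hae⟩
  -- the auxiliary monotone function G = f^(-1/3) on (0, δ], extended monotonically
  set p : ℝ := -(1:ℝ)/3 with hp
  set G : ℝ → ℝ := fun x => if x ≤ 0 then 0 else f (min x δ) ^ p with hGdef
  have hmem : ∀ x : ℝ, 0 < x → min x δ ∈ Ioc (0:ℝ) δ :=
    fun x hx => ⟨lt_min hx hδ, min_le_right _ _⟩
  have hGpos : ∀ x : ℝ, 0 < x → 0 < G x := by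
    intro x hx
    simp only [hGdef, if_neg (not_le.2 hx)]
    exact Real.rpow_pos_of_pos (hpos _ (hmem x hx)) _
  have hG : Monotone G := by
    intro x y hxy
    by_cases hx : x ≤ 0
    · by_cases hy : y ≤ 0
      · simp [hGdef, hx, hy]
      · simp only [hGdef, if_pos hx]
        exact (hGpos y (not_le.1 hy)).le
    · have hx' : 0 < x := not_le.1 hx
      have hy' : 0 < y := lt_of_lt_of_le hx' hxy
      simp only [hGdef, if_neg (not_le.2 hx'), if_neg (not_le.2 hy')]
      refine Real.rpow_le_rpow_of_nonpos (hpos _ (hmem y hy')) ?_ (by norm_num [hp])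
      exact hdec _ (hmem x hx') _ (hmem y hy') (min_le_min_right _ hxy)
  set μ : Measure ℝ := hG.stieltjesFunction.measure with hμ
  set d : ℝ → ℝ := fun x => (μ.rnDeriv volume x).toReal with hd
  have hGd : ∀ᵐ x, HasDerivAt G (d x) x := hG.ae_hasDerivAt
  have hlt : ∀ᵐ x, μ.rnDeriv volume x < ⊤ := Measure.rnDeriv_lt_top μ volume
  -- a.e. on (0, δ], the rnDeriv dominates C/(3t)
  have key : ∀ᵐ t ∂(volume.restrict (Ioc (0:ℝ) δ)),
      ENNReal.ofReal (C / (3 * t)) ≤ μ.rnDeriv volume t := by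
    have hmemae : ∀ᵐ t ∂(volume.restrict (Ioc (0:ℝ) δ)), t ∈ Ioc (0:ℝ) δ :=
      ae_restrict_mem measurableSet_Ioc
    have hne : ∀ᵐ t ∂(volume.restrict (Ioc (0:ℝ) δ)), t ≠ δ := by
      refine ae_restrict_of_ae ?_
      have : (volume : Measure ℝ) {δ} = 0 := measure_singleton δ
      filter_upwards [measure_eq_zero_iff_ae_notMem.1 this] with t ht
      exact fun h => ht (by simp [h])
    filter_upwards [hderiv, hae, ae_restrict_of_ae hGd, ae_restrict_of_ae hlt,
      hmemae, hne] with t ht1 ht2 ht3 ht4 ht5 ht6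
    have htpos : 0 < t := ht5.1
    have htδ : t < δ := lt_of_le_of_ne ht5.2 ht6
    have hft : 0 < f t := hpos t ht5
    -- G equals f^p near t
    have hEq : G =ᶠ[nhds t] fun x => f x ^ p := by
      filter_upwards [Ioo_mem_nhds htpos htδ] with x hx
      simp [hGdef, not_le.2 hx.1, min_eq_left hx.2.le]
    have hD : HasDerivAt (fun x => f x ^ p) (f' t * p * f t ^ (p - 1)) t :=
      ht1.rpow_const (Or.inl hft.ne')
    have hGD : HasDerivAt G (f' t * p * f t ^ (p - 1)) t :=
      hD.congr_of_eventuallyEq hEq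
    have hdt : d t = f' t * p * f t ^ (p - 1) := ht3.unique hGD
    have hexp : p - 1 = -(4:ℝ)/3 := by norm_num [hp]
    have hbound : C / (3 * t) ≤ d t := by
      rw [hdt, hexp]
      have h2 : C / t ≤ (-f' t) * f t ^ (-(4:ℝ)/3) := ht2
      have h3 : C / (3 * t) = (1/3) * (C / t) := by ring
      rw [h3]
      have : f' t * p * f t ^ (-(4:ℝ)/3) = (1/3) * ((-f' t) * f t ^ (-(4:ℝ)/3)) := by
        rw [hp]; ring
      rw [this]
      linarith
    calc ENNReal.ofReal (C / (3 * t)) ≤ ENNReal.ofReal (d t) := ENNReal.ofReal_le_ofReal hbound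
      _ = μ.rnDeriv volume t := by rw [hd, ENNReal.ofReal_toReal ht4.ne]
  -- choose a tiny `a` and integrate over (a, δ]
  set M : ℝ := hG.stieltjesFunction δ with hM
  set a : ℝ := δ * Real.exp (-(3 * (M + 1) / C)) with ha
  have hapos : 0 < a := mul_pos hδ (Real.exp_pos _)
  have haδ : a < δ := by
    have : Real.exp (-(3 * (M + 1) / C)) < 1 := by
      rw [Real.exp_lt_one_iff]
      have hM0 : 0 ≤ M := le_trans (hGpos δ hδ).le (hG.le_rightLim le_rfl)
      have : 0 < 3 * (M + 1) / C := by positivity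
      linarith
    calc a < δ * 1 := by exact (mul_lt_mul_iff_right₀ hδ).2 this
      _ = δ := mul_one δ
  -- upper bound for μ (Ioc a δ)
  have hμIoc : μ (Ioc a δ) ≤ ENNReal.ofReal M := by
    rw [hμ, StieltjesFunction.measure_Ioc]
    apply ENNReal.ofReal_le_ofReal
    have h0 : 0 ≤ hG.stieltjesFunction a := by
      rw [hG.stieltjesFunction_eq]
      exact le_trans (hGpos a hapos).le (hG.le_rightLim le_rfl)
    linarith
  -- lower bound: the integral of C/(3t) over (a, δ]
  have hint : IntervalIntegrable (fun t : ℝ => C / (3 * t)) volume a δ := by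
    apply ContinuousOn.intervalIntegrable
    apply ContinuousOn.div continuousOn_const (by fun_prop)
    intro x hx
    rw [uIcc_of_le haδ.le] at hx
    have : 0 < x := lt_of_lt_of_le hapos hx.1
    positivity
  have hIoc : IntegrableOn (fun t : ℝ => C / (3 * t)) (Ioc a δ) volume := hint.1
  have hval : ∫ t in Ioc a δ, C / (3 * t) = M + 1 := by
    rw [← intervalIntegral.integral_of_le haδ.le]
    have : ∀ t ∈ uIcc a δ, (fun t : ℝ => C / (3 * t)) t = (C / 3) * (1 / t) := by
      intro t _; field_simp
    rw [intervalIntegral.integral_congr this, intervalIntegral.integral_const_mul,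
      integral_one_div]
    · have hda : δ / a = Real.exp (3 * (M + 1) / C) := by
        rw [ha, Real.exp_neg]
        field_simp
      rw [hda, Real.log_exp]
      field_simp
    · rw [uIcc_of_le haδ.le]
      intro h
      exact absurd h.1 (not_le.2 hapos)
  have hcomp : ENNReal.ofReal (M + 1) ≤ ENNReal.ofReal M := by
    have h1 : ENNReal.ofReal (M + 1)
        = ∫⁻ t in Ioc a δ, ENNReal.ofReal (C / (3 * t)) := by
      rw [← hval]
      apply ofReal_integral_eq_lintegral_ofReal hIoc
      refine (ae_restrict_iff' measurableSet_Ioc).2 (ae_of_all _ fun t ht => ?_)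
      have : 0 < t := lt_of_lt_of_le hapos ht.1.le
      positivity
    have h2 : (∫⁻ t in Ioc a δ, ENNReal.ofReal (C / (3 * t)))
        ≤ ∫⁻ t in Ioc a δ, μ.rnDeriv volume t := by
      apply lintegral_mono_ae
      have hsub : Ioc a δ ⊆ Ioc (0:ℝ) δ := Ioc_subset_Ioc hapos.le le_rfl
      exact Filter.Eventually.filter_mono
        (ae_mono (Measure.restrict_mono hsub le_rfl)) key
    calc ENNReal.ofReal (M + 1) ≤ ∫⁻ t in Ioc a δ, μ.rnDeriv volume t := h1 ▸ h2
      _ ≤ μ (Ioc a δ) := Measure.setLIntegral_rnDeriv_le _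
      _ ≤ ENNReal.ofReal M := hμIoc
  have hM0 : 0 ≤ M := le_trans (hGpos δ hδ).le (hG.le_rightLim le_rfl)
  have := (ENNReal.ofReal_le_ofReal_iff hM0).1 hcomp
  linarith
end

section
/- Let f : 𝒮 → ℝ be a positive decreasing function defined on a measurable set 𝒮 ⊂ (0, δ) whose complement in (0, δ) has Lebesgue measure zero. Then sup over pairs t₁ < t₂ in 𝒮 of the quantity f(t₂)^{4/3}·(t₂ − t₁) / ((t₂ + t₁)·(f(t₁) − f(t₂))) equals +∞. -/
/-! If the quotient were bounded by `M`, then `f s - f q ≥ f q ^ (4/3) / (3 M)` whenever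
`s ≤ q / 2`, so `f` is unbounded near `0`. Take `p` with `f p ^ (1/3) ≥ 112 M`. Stepping left from
`q` by about `14 M p / f q ^ (1/3)` multiplies `f` by `8`, hence doubles its cube root, so the steps
shrink geometrically: infinitely many of them fit into `[p / 2, p]`, and `f` would be infinite at
every point of `S` to the left of `p / 2`. -/

open MeasureTheory Set

theorem nonempty_inter_of_measure_diff_eq_zero {X : Type*} [TopologicalSpace X]
    [MeasurableSpace X] {μ : Measure X} [μ.IsOpenPosMeasure] {U V S : Set X}
    (hS : μ (U \ S) = 0) (hV : IsOpen V) (hVne : V.Nonempty) (hVU : V ⊆ U) :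
    (S ∩ V).Nonempty := by
  by_contra h
  have hVS : V ⊆ U \ S := fun x hx => ⟨hVU hx, fun hxS => h ⟨x, hxS, hx⟩⟩
  exact (hV.measure_pos μ hVne).ne' (measure_mono_null hVS hS)

theorem Real.rpow_four_div_three_eq {x : ℝ} (hx : 0 < x) :
    x ^ ((4:ℝ)/3) = x * x ^ (3:ℝ)⁻¹ := by
  rw [show (4:ℝ)/3 = 1 + 3⁻¹ by norm_num, Real.rpow_add hx, Real.rpow_one]

theorem Real.eight_rpow_inv_three : (8:ℝ) ^ (3:ℝ)⁻¹ = 2 := by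
  rw [show (8:ℝ) = 2 ^ 3 by norm_num]
  exact_mod_cast Real.pow_rpow_inv_natCast (x := (2:ℝ)) (n := 3) (by norm_num) (by norm_num)

/-- The negation of the theorem for the bound `M`, with the denominator cleared. -/
def GrowthBound (S : Set ℝ) (f : ℝ → ℝ) (M : ℝ) : Prop :=
  ∀ s ∈ S, ∀ t ∈ S, s < t → f t ^ ((4:ℝ)/3) * (t - s) ≤ M * ((t + s) * (f s - f t))

namespace GrowthBound

variable {S : Set ℝ} {f : ℝ → ℝ} {M δ : ℝ}

theorem rpow_le_three_mul_sub (hg : GrowthBound S f M) (hM : 0 ≤ M) {s q : ℝ}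
    (hs : s ∈ S) (hq : q ∈ S) (hq0 : 0 < q) (hsq : s ≤ q / 2) (hfq : 0 ≤ f q)
    (hfsq : f q ≤ f s) : f q ^ ((4:ℝ)/3) ≤ 3 * M * (f s - f q) := by
  have hgrowth := hg s hs q hq (by linarith)
  have : f q ^ ((4:ℝ)/3) * (q / 2) ≤ 3 * M * (f s - f q) * (q / 2) :=
    calc f q ^ ((4:ℝ)/3) * (q / 2) ≤ f q ^ ((4:ℝ)/3) * (q - s) := by gcongr; linarith
      _ ≤ M * ((q + s) * (f s - f q)) := hgrowth
      _ ≤ M * (3 * q / 2 * (f s - f q)) := by gcongr; linarith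
      _ = 3 * M * (f s - f q) * (q / 2) := by ring
  exact le_of_mul_le_mul_right this (by linarith)

theorem two_mul_rpow_le (hg : GrowthBound S f M) (hM : 0 < M) {s q r : ℝ}
    (hs : s ∈ S) (hq : q ∈ S) (hs0 : 0 ≤ s) (hsq : s < q) (hqr : q ≤ r) (hfq : 0 < f q)
    (hfsq : f q ≤ f s) (hgap : 14 * M * r / f q ^ (3:ℝ)⁻¹ ≤ q - s) :
    2 * f q ^ (3:ℝ)⁻¹ ≤ f s ^ (3:ℝ)⁻¹ := by
  have hMr : 0 < 2 * M * r := by have := hs0.trans_lt (hsq.trans_le hqr); positivity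
  have : 2 * M * r * (8 * f q) ≤ 2 * M * r * f s :=
    calc 2 * M * r * (8 * f q)
        = 2 * M * r * f q + f q * f q ^ (3:ℝ)⁻¹ * (14 * M * r / f q ^ (3:ℝ)⁻¹) := by
          field_simp; ring
      _ ≤ 2 * M * r * f q + f q ^ ((4:ℝ)/3) * (q - s) := by
          rw [Real.rpow_four_div_three_eq hfq]; gcongr
      _ ≤ 2 * M * r * f q + M * ((q + s) * (f s - f q)) := by gcongr 1; exact hg s hs q hq hsq
      _ ≤ 2 * M * r * f q + M * (2 * r * (f s - f q)) := by gcongr; linarith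
      _ = 2 * M * r * f s := by ring
  have h8 : 8 * f q ≤ f s := le_of_mul_le_mul_left this hMr
  calc 2 * f q ^ (3:ℝ)⁻¹ = (8 * f q) ^ (3:ℝ)⁻¹ := by
        rw [Real.mul_rpow (by norm_num) hfq.le, Real.eight_rpow_inv_three]
    _ ≤ f s ^ (3:ℝ)⁻¹ := by gcongr

theorem not_bddAbove_image (hg : GrowthBound S f M) (hM : 0 < M) (hsub : S ⊆ Ioo 0 δ)
    (hdense : ∀ a b, 0 ≤ a → a < b → b ≤ δ → (S ∩ Ioo a b).Nonempty)
    (hpos : ∀ t ∈ S, 0 < f t) (hanti : AntitoneOn f S) (hne : S.Nonempty) :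
    ¬ BddAbove (f '' S) := by
  obtain ⟨p, hp⟩ := hne
  have hfp := hpos p hp
  set c := f p ^ ((4:ℝ)/3) / (3 * M)
  have hc : 0 < c := by positivity
  have hstep : ∀ k : ℕ, ∃ q ∈ S, q ≤ p ∧ f p + k * c ≤ f q := by
    intro k
    induction k with
    | zero => exact ⟨p, hp, le_rfl, by simp⟩
    | succ k ih =>
      obtain ⟨q, hq, hqp, hfq⟩ := ih
      obtain ⟨hq0, hqδ⟩ := hsub hq
      obtain ⟨s, hs, hs1, hs2⟩ := hdense (q / 4) (q / 2) (by positivity) (by linarith) (by linarith)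
      have hfsq : f q ≤ f s := hanti hs hq (by linarith)
      have hfpq : f p ^ ((4:ℝ)/3) ≤ f q ^ ((4:ℝ)/3) :=
        Real.rpow_le_rpow hfp.le (hanti hq hp hqp) (by norm_num)
      have := hg.rpow_le_three_mul_sub hM.le hs hq hq0 hs2.le (hpos q hq).le hfsq
      have : c ≤ f s - f q := by rw [div_le_iff₀ (by positivity)]; linarith
      refine ⟨s, hs, by linarith, ?_⟩
      push_cast
      linarith
  refine not_bddAbove_iff.2 fun B => ?_
  obtain ⟨k, hk⟩ := exists_nat_gt ((B - f p) / c)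
  obtain ⟨q, hq, -, hfq⟩ := hstep k
  refine ⟨f q, mem_image_of_mem f hq, ?_⟩
  rw [div_lt_iff₀ hc] at hk
  linarith

theorem exists_two_pow_mul_le (hg : GrowthBound S f M) (hM : 0 < M) (hsub : S ⊆ Ioo 0 δ)
    (hdense : ∀ a b, 0 ≤ a → a < b → b ≤ δ → (S ∩ Ioo a b).Nonempty)
    (hpos : ∀ t ∈ S, 0 < f t) (hanti : AntitoneOn f S) {p : ℝ} (hp : p ∈ S)
    (hbig : 112 * M ≤ f p ^ (3:ℝ)⁻¹) (k : ℕ) :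
    ∃ q ∈ S, p / 2 ≤ q ∧ 2 ^ k * f p ^ (3:ℝ)⁻¹ ≤ f q ^ (3:ℝ)⁻¹ := by
  have hp0 := (hsub hp).1
  set g := f p ^ (3:ℝ)⁻¹
  have hg0 : 0 < g := Real.rpow_pos_of_pos (hpos p hp) _
  set D := 56 * M * p / g
  have hD0 : 0 < D := by positivity
  have hD : D ≤ p / 2 := by rw [div_le_iff₀ hg0]; nlinarith
  -- Step `k` moves left by at most `D / 2 ^ (k + 1)`; `112 M ≤ f p ^ (1/3)` gives `D ≤ p / 2`.
  suffices ∀ k : ℕ, ∃ q ∈ S, p / 2 + D / 2 ^ k ≤ q ∧ q ≤ p ∧ 2 ^ k * g ≤ f q ^ (3:ℝ)⁻¹ by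
    obtain ⟨q, hq, hqlo, -, hgq⟩ := this k
    exact ⟨q, hq, by linarith [show 0 < D / 2 ^ k by positivity], hgq⟩
  intro k
  induction k with
  | zero => exact ⟨p, hp, by simp; linarith, le_rfl, (one_mul g).le⟩
  | succ k ih =>
    obtain ⟨q, hq, hqlo, hqp, hgq⟩ := ih
    have hDk : 0 < D / 2 ^ k := by positivity
    set β := 14 * M * p / f q ^ (3:ℝ)⁻¹
    have hβ0 : 0 < β := div_pos (by positivity) (Real.rpow_pos_of_pos (hpos q hq) _)
    have hβ : β ≤ D / 2 ^ k / 4 :=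
      calc β ≤ 14 * M * p / (2 ^ k * g) :=
            div_le_div_of_nonneg_left (by positivity) (by positivity) hgq
        _ = D / 2 ^ k / 4 := by simp only [D]; field_simp; ring
    obtain ⟨s, hs, hs1, hs2⟩ := hdense (q - 2 * β) (q - β) (by linarith) (by linarith)
      (by linarith [(hsub hq).2])
    have hgs := hg.two_mul_rpow_le hM hs hq (by linarith) (by linarith) hqp (hpos q hq)
      (hanti hs hq (by linarith)) (show β ≤ q - s by linarith)
    have hDk1 : D / 2 ^ (k + 1) = D / 2 ^ k / 2 := by ring
    refine ⟨s, hs, by linarith, by linarith, ?_⟩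
    rw [pow_succ]
    linarith

theorem not_growthBound (hδ : 0 < δ) (hM : 0 < M) (hsub : S ⊆ Ioo 0 δ)
    (hdense : ∀ a b, 0 ≤ a → a < b → b ≤ δ → (S ∩ Ioo a b).Nonempty)
    (hpos : ∀ t ∈ S, 0 < f t) (hanti : AntitoneOn f S) : ¬ GrowthBound S f M := by
  intro hg
  have hne : S.Nonempty := (hdense 0 δ le_rfl hδ le_rfl).mono inter_subset_left
  obtain ⟨_, ⟨p, hp, rfl⟩, hfp⟩ :=
    not_bddAbove_iff.1 (hg.not_bddAbove_image hM hsub hdense hpos hanti hne) ((112 * M) ^ 3)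
  have hbig : 112 * M ≤ f p ^ (3:ℝ)⁻¹ :=
    calc 112 * M = ((112 * M) ^ 3) ^ (3:ℝ)⁻¹ := by
          exact_mod_cast (Real.pow_rpow_inv_natCast (by positivity) (by norm_num)).symm
      _ ≤ f p ^ (3:ℝ)⁻¹ := by gcongr
  obtain ⟨x, hx, -, hxp⟩ := hdense 0 (p / 2) le_rfl (by linarith [(hsub hp).1])
    (by linarith [(hsub hp).2])
  have hgp : 0 < f p ^ (3:ℝ)⁻¹ := Real.rpow_pos_of_pos (hpos p hp) _
  obtain ⟨k, hk⟩ := pow_unbounded_of_one_lt (f x ^ (3:ℝ)⁻¹ / f p ^ (3:ℝ)⁻¹) one_lt_two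
  obtain ⟨q, hq, hqp, hgq⟩ := hg.exists_two_pow_mul_le hM hsub hdense hpos hanti hp hbig k
  have hfxq : f q ^ (3:ℝ)⁻¹ ≤ f x ^ (3:ℝ)⁻¹ :=
    Real.rpow_le_rpow (hpos q hq).le (hanti hx hq (by linarith)) (by norm_num)
  rw [div_lt_iff₀ hgp] at hk
  linarith

end GrowthBound

theorem stmt1_general (δ : ℝ) (hδ : 0 < δ) (S : Set ℝ)
    (hSsub : S ⊆ Ioo (0:ℝ) δ) (hSfull : volume (Ioo (0:ℝ) δ \ S) = 0)
    (f : ℝ → ℝ)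
    (hpos : ∀ t ∈ S, 0 < f t)
    (hdec : ∀ s ∈ S, ∀ t ∈ S, s < t → f t < f s) :
    ∀ M : ℝ, ∃ t₁ ∈ S, ∃ t₂ ∈ S, t₁ < t₂ ∧
      (f t₂) ^ ((4:ℝ)/3) * (t₂ - t₁) / ((t₂ + t₁) * (f t₁ - f t₂)) > M := by
  intro M
  by_contra! hbounded
  have hdense : ∀ a b, 0 ≤ a → a < b → b ≤ δ → (S ∩ Ioo a b).Nonempty := fun a b ha hab hb =>
    nonempty_inter_of_measure_diff_eq_zero hSfull isOpen_Ioo (nonempty_Ioo.2 hab)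
      (Ioo_subset_Ioo ha hb)
  have hanti : AntitoneOn f S := StrictAntiOn.antitoneOn fun s hs t ht hst => hdec s hs t ht hst
  refine GrowthBound.not_growthBound (M := max M 1) hδ (lt_max_of_lt_right one_pos) hSsub hdense
    hpos hanti fun s hs t ht hst => ?_
  have hden : 0 < (t + s) * (f s - f t) :=
    mul_pos (by linarith [(hSsub hs).1, (hSsub ht).1]) (by linarith [hdec s hs t ht hst])
  calc f t ^ ((4:ℝ)/3) * (t - s) ≤ M * ((t + s) * (f s - f t)) :=
        (div_le_iff₀ hden).1 (hbounded s hs t ht hst)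
    _ ≤ max M 1 * ((t + s) * (f s - f t)) := by gcongr; exact le_max_left M 1

/-- **Lemma 5.4.** Let `f : 𝒮 → ℝ` be a positive decreasing function on a measurable
set `𝒮 ⊂ (0, δ)` of full measure. Then
`sup_{t₁,t₂ ∈ 𝒮, t₁ < t₂} f(t₂)^(4/3) (t₂ - t₁) / ((t₂ + t₁)(f(t₁) - f(t₂))) = ∞`. -/
theorem stmt1 (δ : ℝ) (hδ : 0 < δ) (S : Set ℝ) (hSmeas : MeasurableSet S)
    (hSsub : S ⊆ Ioo (0:ℝ) δ) (hSfull : volume (Ioo (0:ℝ) δ \ S) = 0)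
    (f : ℝ → ℝ)
    (hpos : ∀ t ∈ S, 0 < f t)
    (hdec : ∀ s ∈ S, ∀ t ∈ S, s < t → f t < f s) :
    ∀ M : ℝ, ∃ t₁ ∈ S, ∃ t₂ ∈ S, t₁ < t₂ ∧
      (f t₂) ^ ((4:ℝ)/3) * (t₂ - t₁) / ((t₂ + t₁) * (f t₁ - f t₂)) > M :=
  stmt1_general δ hδ S hSsub hSfull f hpos hdec
end

section
/- Let v ∈ L⁶(ℝ³) ∩ D^{1,2}(ℝ³) and p ∈ L³(ℝ³) ∩ D^{1,3/2}(ℝ³) be axially symmetric and satisfy the stationary Euler equations (v·∇)v + ∇p = 0, div v = 0 a.e. in ℝ³. Then for almost every r₀ > 0, |p(r₀, z)| + |v(r₀, z)| → 0 as |z| → ∞, where (r, z) are cylindrical coordinates. -/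
open MeasureTheory Set Filter

/-- Partial derivative in the `r` (first) direction on the meridional half-plane. -/
noncomputable def dr (f : ℝ × ℝ → ℝ) (x : ℝ × ℝ) : ℝ := fderiv ℝ f x (1, 0)

/-- Partial derivative in the `z` (second) direction on the meridional half-plane. -/
noncomputable def dz (f : ℝ × ℝ → ℝ) (x : ℝ × ℝ) : ℝ := fderiv ℝ f x (0, 1)

/-!
For almost every `r₀ > 0`, Fubini turns the weighted integrability on the half-plane into
`p(r₀, ·) ∈ L³` with `∂_z p(r₀, ·) ∈ L^{3/2}`, and `v(r₀, ·) ∈ L⁶` with `∂_z v(r₀, ·) ∈ L²`.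
For `g = p²` (resp. `g = v⁴` componentwise) Young's inequality makes `g'` integrable, so `g` has
limits at `±∞`; these limits vanish because `|g|^{3/2}` is integrable.
-/

open Topology

theorem eq_zero_of_integrable_of_tendsto_atTop {E : Type*} [NormedAddCommGroup E]
    {f : ℝ → E} {L : E} (hf : Integrable f) (hL : Tendsto f atTop (𝓝 L)) : L = 0 := by
  by_contra hne
  have hpos : 0 < ‖L‖ := norm_pos_iff.2 hne
  obtain ⟨N, hN⟩ := eventually_atTop.1
    (hL.norm.eventually (eventually_ge_nhds (half_lt_self hpos)))
  have hconst : IntegrableOn (fun _ => ‖L‖ / 2) (Ici N) :=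
    hf.integrableOn.norm.mono' aestronglyMeasurable_const
      ((ae_restrict_iff' measurableSet_Ici).2 (ae_of_all _ fun z hz => by
        simpa [abs_of_pos hpos] using hN z hz))
  rw [integrableOn_const_iff, Real.volume_Ici] at hconst
  simp [hne] at hconst

theorem eq_zero_of_integrable_of_tendsto_atBot {E : Type*} [NormedAddCommGroup E]
    {f : ℝ → E} {L : E} (hf : Integrable f) (hL : Tendsto f atBot (𝓝 L)) : L = 0 :=
  eq_zero_of_integrable_of_tendsto_atTop hf.comp_neg (hL.comp tendsto_neg_atTop_atBot)

theorem tendsto_cocompact_zero_of_integrable_deriv {E : Type*} [NormedAddCommGroup E]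
    [NormedSpace ℝ E] [CompleteSpace E] {g : ℝ → E} (hg : Differentiable ℝ g)
    (hg' : Integrable (deriv g)) {q : ℝ} (hq : 0 < q) (hgq : Integrable fun z => ‖g z‖ ^ q) :
    Tendsto g (cocompact ℝ) (𝓝 0) := by
  have hTop := tendsto_limUnder_of_hasDerivAt_of_integrableOn_Ioi (a := 0)
    (fun z _ => (hg z).hasDerivAt) hg'.integrableOn
  have hBot := tendsto_limUnder_of_hasDerivAt_of_integrableOn_Iic (a := 0)
    (fun z _ => (hg z).hasDerivAt) hg'.integrableOn
  have hpow : ∀ {l : Filter ℝ} {L : E}, Tendsto g l (𝓝 L) →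
      Tendsto (fun z => ‖g z‖ ^ q) l (𝓝 (‖L‖ ^ q)) :=
    fun h => h.norm.rpow_const (Or.inr hq.le)
  have hzero : ∀ {L : E}, ‖L‖ ^ q = 0 → L = 0 := fun h =>
    norm_eq_zero.1 ((Real.rpow_eq_zero (norm_nonneg _) hq.ne').1 h)
  rw [cocompact_eq_atBot_atTop, tendsto_sup]
  exact ⟨hzero (eq_zero_of_integrable_of_tendsto_atBot hgq (hpow hBot)) ▸ hBot,
    hzero (eq_zero_of_integrable_of_tendsto_atTop hgq (hpow hTop)) ▸ hTop⟩

theorem tendsto_zero_of_tendsto_pow_zero {α : Type*} {l : Filter α} {f : α → ℝ} {n : ℕ}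
    (hn : n ≠ 0) (h : Tendsto (fun x => f x ^ n) l (𝓝 0)) : Tendsto f l (𝓝 0) := by
  rw [tendsto_zero_iff_abs_tendsto_zero]
  have h' := h.abs.rpow_const (p := (n : ℝ)⁻¹) (Or.inr (by positivity))
  simpa [Function.comp_def, abs_pow, Real.pow_rpow_inv_natCast (abs_nonneg _) hn, hn] using h'

theorem mul_le_cube_add_rpow {a b : ℝ} (ha : 0 ≤ a) (hb : 0 ≤ b) :
    a * b ≤ a ^ 3 + b ^ (3 / 2 : ℝ) := by
  have hconj : (3 : ℝ).HolderConjugate (3 / 2) :=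
    Real.holderConjugate_iff.2 ⟨by norm_num, by norm_num⟩
  have hyoung := Real.young_inequality_of_nonneg ha hb hconj
  rw [show a ^ (3 : ℝ) = a ^ 3 by norm_cast] at hyoung
  nlinarith [pow_nonneg ha 3, Real.rpow_nonneg hb (3 / 2 : ℝ)]

theorem tendsto_cocompact_zero_of_integrable_cube {f : ℝ → ℝ} (hf : Differentiable ℝ f)
    (h3 : Integrable fun z => |f z| ^ 3)
    (hd : Integrable fun z => |deriv f z| ^ (3 / 2 : ℝ)) :
    Tendsto f (cocompact ℝ) (𝓝 0) := by
  have hderiv : deriv (fun z => f z ^ 2) = fun z => 2 * f z * deriv f z := by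
    ext z; simpa using ((hf z).hasDerivAt.fun_pow 2).deriv
  refine tendsto_zero_of_tendsto_pow_zero two_ne_zero
    (tendsto_cocompact_zero_of_integrable_deriv (hf.pow 2) ?_ (q := 3 / 2) (by norm_num) ?_)
  · refine ((h3.add hd).const_mul 2).mono' (measurable_deriv _).aestronglyMeasurable
      (ae_of_all _ fun z => ?_)
    have := mul_le_cube_add_rpow (abs_nonneg (f z)) (abs_nonneg (deriv f z))
    simp only [hderiv, norm_mul, Real.norm_eq_abs, abs_two, Pi.add_apply]
    linarith
  · refine h3.congr (ae_of_all _ fun z => ?_)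
    simp only [norm_pow, Real.norm_eq_abs]
    rw [← Real.rpow_natCast, ← Real.rpow_natCast, ← Real.rpow_mul (abs_nonneg _)]
    norm_num

theorem tendsto_cocompact_zero_of_integrable_pow_six {f : ℝ → ℝ} (hf : Differentiable ℝ f)
    (h6 : Integrable fun z => f z ^ 6) (hd : Integrable fun z => deriv f z ^ 2) :
    Tendsto f (cocompact ℝ) (𝓝 0) := by
  have hderiv : deriv (fun z => f z ^ 4) = fun z => 4 * f z ^ 3 * deriv f z := by
    ext z; simpa using ((hf z).hasDerivAt.fun_pow 4).deriv
  refine tendsto_zero_of_tendsto_pow_zero four_ne_zero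
    (tendsto_cocompact_zero_of_integrable_deriv (hf.pow 4) ?_ (q := 3 / 2) (by norm_num) ?_)
  · refine ((h6.add hd).const_mul 2).mono' (measurable_deriv _).aestronglyMeasurable
      (ae_of_all _ fun z => ?_)
    simp only [hderiv, norm_mul, norm_pow, Real.norm_eq_abs, Pi.add_apply]
    rw [abs_of_pos (by norm_num : (0 : ℝ) < 4)]
    nlinarith [sq_nonneg (|f z| ^ 3 - |deriv f z|), Even.pow_abs (by decide : Even 6) (f z),
      sq_abs (deriv f z)]
  · refine h6.congr (ae_of_all _ fun z => ?_)
    simp only [norm_pow, Real.norm_eq_abs]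
    rw [← Even.pow_abs (by decide), ← Real.rpow_natCast, ← Real.rpow_natCast,
      ← Real.rpow_mul (abs_nonneg _)]
    norm_num

theorem hasDerivAt_dz {f : ℝ × ℝ → ℝ} {r z : ℝ} (hf : DifferentiableAt ℝ f (r, z)) :
    HasDerivAt (fun t => f (r, t)) (dz f (r, z)) z :=
  hf.hasFDerivAt.comp_hasDerivAt z ((hasDerivAt_const z r).prodMk (hasDerivAt_id z))

theorem deriv_slice_eq_dz {f : ℝ × ℝ → ℝ} (hf : Differentiable ℝ f) (r : ℝ) :
    deriv (fun t => f (r, t)) = fun z => dz f (r, z) :=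
  funext fun _ => (hasDerivAt_dz (hf _)).deriv

theorem measurable_dz (f : ℝ × ℝ → ℝ) : Measurable (dz f) :=
  measurable_fderiv_apply_const ℝ f (0, 1)

theorem abs_dz_le_norm_fderiv (f : ℝ × ℝ → ℝ) (x : ℝ × ℝ) : |dz f x| ≤ ‖fderiv ℝ f x‖ := by
  simpa [dz] using (fderiv ℝ f x).le_opNorm (0, 1)

theorem ae_integrable_slice {G : ℝ × ℝ → ℝ}
    (hG : IntegrableOn (fun x => x.1 * G x) {x | 0 < x.1}) :
    ∀ᵐ r ∂(volume.restrict (Ioi 0)), Integrable fun z => G (r, z) := by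
  have hμ : volume.restrict {x : ℝ × ℝ | 0 < x.1} = (volume.restrict (Ioi 0)).prod volume := by
    rw [show {x : ℝ × ℝ | 0 < x.1} = Ioi 0 ×ˢ univ by ext; simp, Measure.volume_eq_prod,
      ← Measure.restrict_prod_eq_prod_univ]
  rw [IntegrableOn, hμ] at hG
  filter_upwards [hG.prod_right_ae, ae_restrict_mem measurableSet_Ioi] with r hr hr0
  simpa [← mul_assoc, inv_mul_cancel₀ (ne_of_gt (mem_Ioi.1 hr0))] using hr.const_mul r⁻¹

theorem ae_integrable_slice_of_abs_le {F G : ℝ × ℝ → ℝ}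
    (hG : IntegrableOn (fun x => x.1 * G x) {x | 0 < x.1}) (hF : Measurable F)
    (hFG : ∀ x, |F x| ≤ G x) :
    ∀ᵐ r ∂(volume.restrict (Ioi 0)), Integrable fun z => F (r, z) := by
  filter_upwards [ae_integrable_slice hG] with r hr
  exact hr.mono' (hF.comp measurable_prodMk_left).aestronglyMeasurable
    (ae_of_all _ fun z => hFG (r, z))

theorem ae_tendsto_slice_of_cube {f G H : ℝ × ℝ → ℝ} (hf : Differentiable ℝ f)
    (hG : IntegrableOn (fun x => x.1 * G x) {x | 0 < x.1})
    (hH : IntegrableOn (fun x => x.1 * H x) {x | 0 < x.1})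
    (hfG : ∀ x, |f x| ^ 3 ≤ G x) (hfH : ∀ x, ‖fderiv ℝ f x‖ ^ (3 / 2 : ℝ) ≤ H x) :
    ∀ᵐ r ∂(volume.restrict (Ioi 0)), Tendsto (fun z => f (r, z)) (cocompact ℝ) (𝓝 0) := by
  have hf3 : ∀ x, |(|f x| ^ 3)| ≤ G x := fun x => by
    rw [abs_of_nonneg (by positivity)]; exact hfG x
  have hdf : ∀ x, |(|dz f x| ^ (3 / 2 : ℝ))| ≤ H x := fun x => by
    rw [abs_of_nonneg (by positivity)]
    exact (Real.rpow_le_rpow (abs_nonneg _) (abs_dz_le_norm_fderiv f x) (by norm_num)).trans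
      (hfH x)
  filter_upwards [ae_integrable_slice_of_abs_le hG (hf.continuous.abs.pow 3).measurable hf3,
    ae_integrable_slice_of_abs_le hH ((measurable_dz f).abs.pow_const _) hdf] with r h3 hd
  exact tendsto_cocompact_zero_of_integrable_cube (hf.comp (by fun_prop))
    h3 (by rwa [deriv_slice_eq_dz hf])

theorem ae_tendsto_slice_of_pow_six {f G H : ℝ × ℝ → ℝ} (hf : Differentiable ℝ f)
    (hG : IntegrableOn (fun x => x.1 * G x) {x | 0 < x.1})
    (hH : IntegrableOn (fun x => x.1 * H x) {x | 0 < x.1})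
    (hfG : ∀ x, f x ^ 6 ≤ G x) (hfH : ∀ x, ‖fderiv ℝ f x‖ ^ 2 ≤ H x) :
    ∀ᵐ r ∂(volume.restrict (Ioi 0)), Tendsto (fun z => f (r, z)) (cocompact ℝ) (𝓝 0) := by
  have hf6 : ∀ x, |f x ^ 6| ≤ G x := fun x => by
    rw [abs_of_nonneg (by positivity)]; exact hfG x
  have hdf : ∀ x, |dz f x ^ 2| ≤ H x := fun x => by
    rw [abs_of_nonneg (by positivity), ← sq_abs]
    exact (pow_le_pow_left₀ (abs_nonneg _) (abs_dz_le_norm_fderiv f x) 2).trans (hfH x)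
  filter_upwards [ae_integrable_slice_of_abs_le hG (hf.continuous.pow 6).measurable hf6,
    ae_integrable_slice_of_abs_le hH ((measurable_dz f).pow_const 2) hdf] with r h6 hd
  exact tendsto_cocompact_zero_of_integrable_pow_six (hf.comp (by fun_prop))
    h6 (by rwa [deriv_slice_eq_dz hf])

theorem stmt10_general (vθ vr vz p : ℝ × ℝ → ℝ)
    (hv : Differentiable ℝ vθ) (hv' : Differentiable ℝ vr)
    (hv'' : Differentiable ℝ vz) (hp : Differentiable ℝ p)
    (hint1 : IntegrableOn
      (fun x => x.1 * ((vθ x ^ 2 + vr x ^ 2 + vz x ^ 2) ^ 3 + |p x| ^ 3))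
      {x : ℝ × ℝ | 0 < x.1} volume)
    (hint2 : IntegrableOn
      (fun x => x.1 * (‖fderiv ℝ vθ x‖ ^ 2 + ‖fderiv ℝ vr x‖ ^ 2 +
        ‖fderiv ℝ vz x‖ ^ 2 + ‖fderiv ℝ p x‖ ^ ((3:ℝ)/2)))
      {x : ℝ × ℝ | 0 < x.1} volume) :
    ∀ᵐ r₀ ∂(volume.restrict (Ioi (0:ℝ))),
      Tendsto (fun z : ℝ => |p (r₀, z)| +
        Real.sqrt (vθ (r₀, z) ^ 2 + vr (r₀, z) ^ 2 + vz (r₀, z) ^ 2))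
        (cocompact ℝ) (nhds 0) := by
  have hvel : ∀ {a s : ℝ} (x : ℝ × ℝ), a ^ 2 ≤ s → a ^ 6 ≤ s ^ 3 + |p x| ^ 3 := by
    intro a s x h
    calc a ^ 6 = (a ^ 2) ^ 3 := by ring
      _ ≤ s ^ 3 := pow_le_pow_left₀ (sq_nonneg a) h 3
      _ ≤ s ^ 3 + |p x| ^ 3 := le_add_of_nonneg_right (by positivity)
  have hDp : ∀ x, 0 ≤ ‖fderiv ℝ p x‖ ^ ((3:ℝ)/2) := fun x => by positivity
  filter_upwards [
    ae_tendsto_slice_of_cube hp hint1 hint2 (fun _ => le_add_of_nonneg_left (by positivity))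
      (fun _ => le_add_of_nonneg_left (by positivity)),
    ae_tendsto_slice_of_pow_six hv hint1 hint2
      (fun x => hvel x (by linarith [sq_nonneg (vr x), sq_nonneg (vz x)]))
      (fun x => by linarith [hDp x, sq_nonneg ‖fderiv ℝ vr x‖, sq_nonneg ‖fderiv ℝ vz x‖]),
    ae_tendsto_slice_of_pow_six hv' hint1 hint2
      (fun x => hvel x (by linarith [sq_nonneg (vθ x), sq_nonneg (vz x)]))
      (fun x => by linarith [hDp x, sq_nonneg ‖fderiv ℝ vθ x‖, sq_nonneg ‖fderiv ℝ vz x‖]),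
    ae_tendsto_slice_of_pow_six hv'' hint1 hint2
      (fun x => hvel x (by linarith [sq_nonneg (vθ x), sq_nonneg (vr x)]))
      (fun x => by linarith [hDp x, sq_nonneg ‖fderiv ℝ vθ x‖, sq_nonneg ‖fderiv ℝ vr x‖])]
    with r hpr hθ hr hz
  simpa using hpr.abs.add (((hθ.pow 2).add (hr.pow 2)).add (hz.pow 2)).sqrt

/-- **Lemma 4.2.** Let `(v, p)` be an axially symmetric solution of the stationary Euler
system, written in cylindrical coordinates `(r, z)` on the half-plane `P₊`, with
`∫ r(|v|⁶ + |p|³) < ∞` and `∫ r(|∇v|² + |∇p|^{3/2}) < ∞`. Then for almost every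
`r₀ > 0`, `|p(r₀,z)| + |v(r₀,z)| → 0` as `|z| → ∞`. -/
theorem stmt10 (vθ vr vz p : ℝ × ℝ → ℝ)
    (hv : Differentiable ℝ vθ) (hv' : Differentiable ℝ vr)
    (hv'' : Differentiable ℝ vz) (hp : Differentiable ℝ p)
    (hint1 : IntegrableOn
      (fun x => x.1 * ((vθ x ^ 2 + vr x ^ 2 + vz x ^ 2) ^ 3 + |p x| ^ 3))
      {x : ℝ × ℝ | 0 < x.1} volume)
    (hint2 : IntegrableOn
      (fun x => x.1 * (‖fderiv ℝ vθ x‖ ^ 2 + ‖fderiv ℝ vr x‖ ^ 2 +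
        ‖fderiv ℝ vz x‖ ^ 2 + ‖fderiv ℝ p x‖ ^ ((3:ℝ)/2)))
      {x : ℝ × ℝ | 0 < x.1} volume)
    (heuler : ∀ᵐ x ∂(volume.restrict {x : ℝ × ℝ | 0 < x.1}),
      dz p x + vr x * dr vz x + vz x * dz vz x = 0 ∧
      dr p x - (vθ x) ^ 2 / x.1 + vr x * dr vr x + vz x * dz vr x = 0 ∧
      vθ x * vr x / x.1 + vr x * dr vθ x + vz x * dz vθ x = 0 ∧
      dr (fun y => y.1 * vr y) x + dz (fun y => y.1 * vz y) x = 0) :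
    ∀ᵐ r₀ ∂(volume.restrict (Ioi (0:ℝ))),
      Tendsto (fun z : ℝ => |p (r₀, z)| +
        Real.sqrt (vθ (r₀, z) ^ 2 + vr (r₀, z) ^ 2 + vz (r₀, z) ^ 2))
        (cocompact ℝ) (nhds 0) :=
  stmt10_general vθ vr vz p hv hv' hv'' hp hint1 hint2
end
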